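/- arXiv:0911.1803 — 3 statements merged into one kernel-verified Lean document; each statement's English description precedes it below -/
import Mathlib

section
/- Let R, S be complex m × m matrices whose pencil is regular, i.e., det(αR + βS) ≠ 0 for some (α, β) ∈ ℂ². Let (a b; c d) be an invertible 2 × 2 complex matrix and set R' = aR + cS, S' = bR + dS. Let f(t) = det(tR + S) and g(t) = det(tR' + S'), polynomials in t. Then g is not the zero polynomial, and for every x ∈ ℂ with cx + d ≠ 0, the multiplicity of x as a root of g equals the multiplicity of y = (ax + b)/(cx + d) as a root of f. (Finite elementary divisor degrees of a regular pencil are preserved under Alice's action, with the associated eigenvalues transformed by the linear fractional transformation.) -/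
/-!
For `c t + d ≠ 0` we have `det (t R' + S') = det ((a t + b) R + (c t + d) S)
= (c t + d) ^ m f ((a t + b) / (c t + d))`, so `g` is the degree-`m` homogenisation of `f`
composed with the Möbius map `t ↦ (a t + b) / (c t + d)`. Writing `f = (X - y) ^ k h` with
`h y ≠ 0`, each factor `X - y` turns into `(a X + b) - y (c X + d) = (a - y c) (X - x)`, where
`a - y c ≠ 0` because `a d - b c ≠ 0`, while `h` turns into a polynomial not vanishing at `x`.
So `g = H (X - x) ^ k` with `H x ≠ 0`, which gives both the multiplicity and `g ≠ 0`.
-/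

open Matrix Polynomial

section Pencil

variable {K ι : Type*} [Field K] [Fintype ι] [DecidableEq ι]

noncomputable def pencilDet (P Q : Matrix ι ι K) : K[X] :=
  det ((X : K[X]) • P.map C + Q.map C)

theorem eval_pencilDet (P Q : Matrix ι ι K) (t : K) :
    (pencilDet P Q).eval t = det (t • P + Q) := by
  rw [pencilDet, ← coe_evalRingHom, RingHom.map_det]
  congr 1
  ext i j
  simp [mul_comm _ t]

theorem natDegree_pencilDet_le (P Q : Matrix ι ι K) :
    (pencilDet P Q).natDegree ≤ Fintype.card ι :=
  natDegree_det_X_add_C_le P Q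

theorem det_smul_add_smul_eq (P Q : Matrix ι ι K) (u : K) {v : K} (hv : v ≠ 0) :
    det (u • P + v • Q) = v ^ Fintype.card ι * det ((u / v) • P + Q) := by
  rw [← det_smul, smul_add, smul_smul, mul_div_cancel₀ u hv]

theorem pencilDet_ne_zero [Infinite K] {P Q : Matrix ι ι K}
    (hreg : ∃ α β : K, det (α • P + β • Q) ≠ 0) : pencilDet P Q ≠ 0 := by
  obtain ⟨α, β, hαβ⟩ := hreg
  intro h0
  apply hαβ
  rcases eq_or_ne β 0 with rfl | hβ
  · rw [zero_smul, add_zero, det_smul, ← coeff_det_X_add_C_card P Q]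
    change _ * (pencilDet P Q).coeff _ = 0
    rw [h0, coeff_zero, mul_zero]
  · rw [det_smul_add_smul_eq P Q α hβ, ← eval_pencilDet, h0, eval_zero, mul_zero]

/-- `(c X + d) ^ N * p ((a X + b) / (c X + d))`, a polynomial when `p.natDegree ≤ N`. -/
noncomputable def moebiusSubst (a b c d : K) (N : ℕ) (p : K[X]) : K[X] :=
  ∑ i ∈ Finset.range (N + 1), C (p.coeff i) * (C a * X + C b) ^ i * (C c * X + C d) ^ (N - i)

theorem eval_moebiusSubst {a b c d t : K} {N : ℕ} {p : K[X]} (hp : p.natDegree ≤ N)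
    (ht : c * t + d ≠ 0) :
    (moebiusSubst a b c d N p).eval t = (c * t + d) ^ N * p.eval ((a * t + b) / (c * t + d)) := by
  rw [moebiusSubst, eval_finsetSum, eval_eq_sum_range' (Nat.lt_succ_of_le hp), Finset.mul_sum]
  refine Finset.sum_congr rfl fun i hi => ?_
  have hiN : i ≤ N := Nat.lt_succ_iff.mp (Finset.mem_range.mp hi)
  simp only [eval_mul, eval_pow, eval_add, eval_C, eval_X]
  generalize c * t + d = B at ht ⊢
  rw [div_pow, ← Nat.sub_add_cancel hiN, pow_add, Nat.add_sub_cancel]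
  field_simp

theorem eq_of_eval_eq_of_mul_add_ne_zero [Infinite K] {c d : K} (hcd : c ≠ 0 ∨ d ≠ 0)
    {p q : K[X]} (h : ∀ t, c * t + d ≠ 0 → p.eval t = q.eval t) : p = q := by
  have hL : C c * X + C d ≠ 0 := by
    intro hL0
    have h1 := congrArg (coeff · 1) hL0
    have h0 := congrArg (coeff · 0) hL0
    simp [coeff_C] at h0 h1
    tauto
  refine mul_left_cancel₀ hL (Polynomial.funext fun t => ?_)
  simp only [eval_mul, eval_add, eval_C, eval_X]
  rcases eq_or_ne (c * t + d) 0 with ht | ht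
  · rw [ht, zero_mul, zero_mul]
  · rw [h t ht]

theorem pencilDet_smul_add_smul [Infinite K] (P Q : Matrix ι ι K) {a b c d : K}
    (hcd : c ≠ 0 ∨ d ≠ 0) :
    pencilDet (a • P + c • Q) (b • P + d • Q)
      = moebiusSubst a b c d (Fintype.card ι) (pencilDet P Q) := by
  refine eq_of_eval_eq_of_mul_add_ne_zero hcd fun t ht => ?_
  have hpencil :
      t • (a • P + c • Q) + (b • P + d • Q) = (a * t + b) • P + (c * t + d) • Q := by
    module
  rw [eval_pencilDet, hpencil, det_smul_add_smul_eq P Q _ ht,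
    eval_moebiusSubst (natDegree_pencilDet_le P Q) ht, eval_pencilDet]

theorem moebiusSubst_X_sub_C_pow_mul [Infinite K] {a b c d : K} (hcd : c ≠ 0 ∨ d ≠ 0) (y : K)
    {k N : ℕ} {h : K[X]} (hh : h.natDegree + k ≤ N) :
    moebiusSubst a b c d N ((X - C y) ^ k * h)
      = (C a * X + C b - C y * (C c * X + C d)) ^ k * moebiusSubst a b c d (N - k) h := by
  obtain ⟨j, rfl⟩ : ∃ j, N = j + k := ⟨N - k, by omega⟩
  have hdeg : ((X - C y) ^ k * h).natDegree ≤ j + k := by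
    refine natDegree_mul_le.trans ?_
    rw [natDegree_pow, natDegree_X_sub_C]
    omega
  refine eq_of_eval_eq_of_mul_add_ne_zero hcd fun t ht => ?_
  rw [eval_moebiusSubst hdeg ht, Nat.add_sub_cancel]
  simp only [eval_mul, eval_pow, eval_sub, eval_add, eval_C, eval_X]
  rw [eval_moebiusSubst (by omega) ht]
  have hshift : ((a * t + b) / (c * t + d) - y) * (c * t + d) = a * t + b - y * (c * t + d) := by
    rw [sub_mul, div_mul_cancel₀ _ ht]
  rw [← hshift, pow_add, mul_pow]
  ring

theorem exists_pencilDet_smul_add_smul_eq_mul_X_sub_C_pow [Infinite K] {P Q : Matrix ι ι K}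
    (hf : pencilDet P Q ≠ 0) {a b c d x : K} (hA : a * d - b * c ≠ 0) (hx : c * x + d ≠ 0) :
    ∃ H : K[X], H.eval x ≠ 0 ∧ pencilDet (a • P + c • Q) (b • P + d • Q)
      = H * (X - C x) ^ (pencilDet P Q).rootMultiplicity ((a * x + b) / (c * x + d)) := by
  set y := (a * x + b) / (c * x + d) with hy_def
  set k := (pencilDet P Q).rootMultiplicity y
  set h := pencilDet P Q /ₘ (X - C y) ^ k
  have hfac : (X - C y) ^ k * h = pencilDet P Q := pow_mul_divByMonic_rootMultiplicity_eq _ y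
  have hhy : h.eval y ≠ 0 := eval_divByMonic_pow_rootMultiplicity_ne_zero y hf
  have hdeg : h.natDegree + k ≤ Fintype.card ι := by
    have := natDegree_pencilDet_le P Q
    rw [← hfac, natDegree_mul (pow_ne_zero _ (X_sub_C_ne_zero y))
      fun h0 => hhy (by rw [h0, eval_zero]), natDegree_pow, natDegree_X_sub_C] at this
    omega
  have hcd : c ≠ 0 ∨ d ≠ 0 := by
    by_contra! hcd
    simp [hcd.1, hcd.2] at hx
  have hy : y * (c * x + d) = a * x + b := div_mul_cancel₀ _ hx
  have hay : a - y * c ≠ 0 := by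
    intro h0
    apply hA
    linear_combination (c * x + d) * h0 + c * hy
  have hlin : C a * X + C b - C y * (C c * X + C d) = C (a - y * c) * (X - C x) := by
    have hyC := congrArg C hy
    simp only [map_mul, map_add] at hyC
    rw [map_sub, map_mul]
    linear_combination -hyC
  refine ⟨C ((a - y * c) ^ k) * moebiusSubst a b c d (Fintype.card ι - k) h, ?_, ?_⟩
  · rw [eval_mul, eval_C, eval_moebiusSubst (by omega) hx, ← hy_def]
    exact mul_ne_zero (pow_ne_zero _ hay) (mul_ne_zero (pow_ne_zero _ hx) hhy)
  · rw [pencilDet_smul_add_smul P Q hcd, ← hfac, moebiusSubst_X_sub_C_pow_mul hcd y hdeg, hlin,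
      mul_pow, C_pow]
    ring

end Pencil

/-- For a regular pencil `μR + λS` and Alice's action `(R, S) ↦ (R', S') = (aR + cS, bR + dS)`
with `ad − bc ≠ 0`, the polynomial `g(t) = det(tR' + S')` is nonzero and, for every `x` with
`cx + d ≠ 0`, the multiplicity of `x` as a root of `g` equals the multiplicity of
`y = (ax + b)/(cx + d)` as a root of `f(t) = det(tR + S)`. -/
theorem regular_pencil_root_multiplicity (m : ℕ)
    (R S : Matrix (Fin m) (Fin m) ℂ)
    (hreg : ∃ α β : ℂ, (α • R + β • S).det ≠ 0)
    (a b c d : ℂ) (hA : a * d - b * c ≠ 0) :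
    (Matrix.det ((X : ℂ[X]) • (a • R + c • S).map Polynomial.C
          + (b • R + d • S).map Polynomial.C) ≠ 0)
      ∧ ∀ x : ℂ, c * x + d ≠ 0 →
          Polynomial.rootMultiplicity x
              (Matrix.det ((X : ℂ[X]) • (a • R + c • S).map Polynomial.C
                + (b • R + d • S).map Polynomial.C))
            = Polynomial.rootMultiplicity ((a * x + b) / (c * x + d))
                (Matrix.det ((X : ℂ[X]) • R.map Polynomial.C + S.map Polynomial.C)) := by
  have hfactor := fun x (hx : c * x + d ≠ 0) =>
    exists_pencilDet_smul_add_smul_eq_mul_X_sub_C_pow (pencilDet_ne_zero hreg) hA hx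
  obtain ⟨x₀, hx₀⟩ : ∃ x, c * x + d ≠ 0 := by
    by_contra! h
    apply hA
    linear_combination a * h 0 - b * (h 1 - h 0)
  refine ⟨?_, fun x hx => ?_⟩
  · obtain ⟨H, hH, hg⟩ := hfactor x₀ hx₀
    rw [← pencilDet, hg]
    exact mul_ne_zero (fun h0 => hH (by rw [h0, eval_zero])) (pow_ne_zero _ (X_sub_C_ne_zero x₀))
  · obtain ⟨H, hH, hg⟩ := hfactor x hx
    rw [← pencilDet, hg, rootMultiplicity_mul_X_sub_C_pow fun h0 => hH (by rw [h0, eval_zero]),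
      rootMultiplicity_eq_zero hH, zero_add]
    rfl
end

section
/- Let x₁, …, x_m ∈ ℂ be pairwise distinct, let y₁, …, y_m ∈ ℂ be pairwise distinct, let D = diag(x₁, …, x_m) and D' = diag(y₁, …, y_m), and let I be the m × m identity matrix. Then the pairs (I, D) and (I, D') are SLOCC equivalent — i.e., there exist an invertible 2 × 2 complex matrix (a b; c d) and invertible m × m matrices B, C with I = B(aI + cD)Cᵀ and D' = B(bI + dD)Cᵀ — if and only if there exist α, β, γ, δ ∈ ℂ with αδ − βγ ≠ 0 and a permutation σ of {1, …, m} such that γ·x_{σ(i)} + δ ≠ 0 and y_i = (α·x_{σ(i)} + β)/(γ·x_{σ(i)} + δ) for all i. (This is the specialization of the main theorem — SLOCC equivalence of 2 ⊗ m ⊗ n states holds iff the pencils have equal rank, equal minimal indices, equal elementary divisor degrees, and generalized eigenvalues related by a single linear fractional transformation — to regular pencils with m distinct generalized eigenvalues.) -/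
/-!
Both pencils are diagonal. If `1 = B (a + c D) Cᵀ` and `D' = B (b + d D) Cᵀ`, then
`D' - y_j = B ((b + d D) - y_j (a + c D)) Cᵀ` is singular, so every `y_j` satisfies
`b + d x_i = y_j (a + c x_i)` for some `i`, where `a + c x_i ≠ 0` by the first equation.
Distinctness of the `y_j` makes `j ↦ i` a permutation, and `y_j = (d x_i + b) / (c x_i + a)`.
Conversely, a permutation matrix followed by a diagonal rescaling realises any such relation.
-/

open Matrix

lemma smul_one_add_smul_diagonal {n R : Type*} [DecidableEq n] [Semiring R] (s t : R)
    (v : n → R) : s • (1 : Matrix n n R) + t • diagonal v = diagonal fun i => s + t * v i := by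
  ext i j
  by_cases h : i = j <;> simp [h, one_apply]

section

variable {n R : Type*} [Fintype n] [DecidableEq n]

lemma permMatrix_mul_diagonal_mul_transpose [NonAssocSemiring R] (σ : Equiv.Perm n) (v : n → R) :
    σ.permMatrix R * diagonal v * (σ.permMatrix R)ᵀ = diagonal (v ∘ σ) := by
  rw [transpose_permMatrix, PEquiv.toMatrix_toPEquiv_mul, PEquiv.mul_toMatrix_toPEquiv,
    Equiv.Perm.inv_def, Equiv.symm_symm, submatrix_submatrix, Function.comp_id,
    Function.id_comp, submatrix_diagonal_equiv]

variable [CommRing R]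

lemma isUnit_det_permMatrix (σ : Equiv.Perm n) : IsUnit (σ.permMatrix R).det := by
  rw [det_permutation]
  exact (Units.isUnit _).map (Int.castRingHom R)

lemma ne_zero_of_one_eq_mul_diagonal_mul [Nontrivial R] {B C : Matrix n n R} {q : n → R}
    (h : 1 = B * diagonal q * C) (i : n) : q i ≠ 0 := by
  have hdet := congrArg det h
  rw [det_one, det_mul, det_mul, det_diagonal] at hdet
  intro hi
  simp [Finset.prod_eq_zero (Finset.mem_univ i) hi] at hdet

lemma exists_eq_mul_of_diagonal_eq_mul_diagonal_mul [IsDomain R] {B C : Matrix n n R}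
    (hB : IsUnit B.det) (hC : IsUnit C.det) {p q y : n → R}
    (h₁ : 1 = B * diagonal q * C) (h₂ : diagonal y = B * diagonal p * C) (j : n) :
    ∃ i, p i = y j * q i := by
  have hpencil : diagonal (fun i => y i - y j) = B * diagonal (fun i => p i - y j * q i) * C := by
    have hleft : diagonal (fun i => y i - y j) = diagonal y - y j • 1 := by
      ext i k; by_cases h : i = k <;> simp [h, one_apply]
    have hright : diagonal (fun i => p i - y j * q i) = diagonal p - y j • diagonal q := by
      ext i k; by_cases h : i = k <;> simp [h]
    rw [hleft, hright, mul_sub, sub_mul, Matrix.mul_smul, Matrix.smul_mul, ← h₁, ← h₂]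
  have hdet := congrArg det hpencil
  rw [det_mul, det_mul, det_diagonal, det_diagonal,
    Finset.prod_eq_zero (Finset.mem_univ j) (sub_self _)] at hdet
  obtain ⟨i, -, hi⟩ := Finset.prod_eq_zero_iff.mp <|
    (mul_eq_zero.mp ((mul_eq_zero.mp hdet.symm).resolve_right hC.ne_zero)).resolve_left hB.ne_zero
  exact ⟨i, sub_eq_zero.mp hi⟩

end

section

variable {n K : Type*} [Fintype n] [DecidableEq n] [Field K]

theorem exists_perm_eq_div_of_diagonal_eq_mul_diagonal_mul {B C : Matrix n n K}
    (hB : IsUnit B.det) (hC : IsUnit C.det) {p q y : n → K} (hy : Function.Injective y)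
    (h₁ : 1 = B * diagonal q * C) (h₂ : diagonal y = B * diagonal p * C) :
    ∃ σ : Equiv.Perm n, ∀ i, q (σ i) ≠ 0 ∧ y i = p (σ i) / q (σ i) := by
  have hq := ne_zero_of_one_eq_mul_diagonal_mul h₁
  choose τ hτ using exists_eq_mul_of_diagonal_eq_mul_diagonal_mul hB hC h₁ h₂
  have hτy : ∀ j, y j = p (τ j) / q (τ j) := fun j => by rw [hτ, mul_div_cancel_right₀ _ (hq _)]
  have hτinj : Function.Injective τ := fun j k hjk => hy <| by rw [hτy, hτy, hjk]
  exact ⟨.ofBijective τ hτinj.bijective_of_finite, fun i => ⟨hq _, hτy i⟩⟩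

theorem exists_mul_diagonal_mul_transpose_eq_div (σ : Equiv.Perm n) {w : n → K}
    (hw : ∀ i, w i ≠ 0) :
    ∃ B C : Matrix n n K, IsUnit B.det ∧ IsUnit C.det ∧
      ∀ v, B * diagonal v * Cᵀ = diagonal fun i => v (σ i) / w i := by
  refine ⟨diagonal w⁻¹ * σ.permMatrix K, σ.permMatrix K, ?_, ?_, fun v => ?_⟩
  · rw [det_mul, det_diagonal]
    exact .mul (Finset.prod_ne_zero_iff.mpr fun i _ => inv_ne_zero (hw i)).isUnit
      (isUnit_det_permMatrix σ)
  · exact isUnit_det_permMatrix σ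
  · rw [Matrix.mul_assoc, Matrix.mul_assoc, ← Matrix.mul_assoc (σ.permMatrix K),
      permMatrix_mul_diagonal_mul_transpose, diagonal_mul_diagonal]
    simp [div_eq_inv_mul]

end

theorem slocc_equiv_diagonal_iff_lft_general (m : ℕ) (x y : Fin m → ℂ)
    (hy : Function.Injective y) :
    (∃ (a b c d : ℂ) (B C : Matrix (Fin m) (Fin m) ℂ),
        a * d - b * c ≠ 0 ∧ IsUnit B.det ∧ IsUnit C.det ∧
        (1 : Matrix (Fin m) (Fin m) ℂ)
            = B * (a • (1 : Matrix (Fin m) (Fin m) ℂ) + c • Matrix.diagonal x) * Cᵀ ∧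
        Matrix.diagonal y
            = B * (b • (1 : Matrix (Fin m) (Fin m) ℂ) + d • Matrix.diagonal x) * Cᵀ)
      ↔ (∃ (α β γ δ : ℂ) (σ : Equiv.Perm (Fin m)),
          α * δ - β * γ ≠ 0 ∧
          ∀ i, γ * x (σ i) + δ ≠ 0 ∧ y i = (α * x (σ i) + β) / (γ * x (σ i) + δ)) := by
  simp only [smul_one_add_smul_diagonal]
  constructor
  · rintro ⟨a, b, c, d, B, C, had, hB, hC, h₁, h₂⟩
    obtain ⟨σ, hσ⟩ := exists_perm_eq_div_of_diagonal_eq_mul_diagonal_mul hB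
      (isUnit_det_transpose C hC) hy h₁ h₂
    refine ⟨d, b, c, a, σ, by rwa [mul_comm d], fun i => ?_⟩
    simpa only [add_comm a, add_comm b] using hσ i
  · rintro ⟨α, β, γ, δ, σ, hαδ, hσ⟩
    obtain ⟨B, C, hB, hC, hBC⟩ :=
      exists_mul_diagonal_mul_transpose_eq_div σ fun i => (hσ i).1
    refine ⟨δ, β, γ, α, B, C, by rwa [mul_comm δ], hB, hC, ?_, ?_⟩
    · rw [hBC, ← diagonal_one]
      exact congrArg diagonal <| funext fun i => by rw [add_comm, div_self (hσ i).1]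
    · rw [hBC]
      exact congrArg diagonal <| funext fun i => by rw [(hσ i).2, add_comm β]

/-- For diagonalizable regular pencils `(I, D)`, `(I, D')` with pairwise distinct diagonal
entries `x₁, …, x_m` and `y₁, …, y_m`, SLOCC equivalence holds iff there is a single linear
fractional transformation and a permutation `σ` with `y_i = (α x_{σ(i)} + β)/(γ x_{σ(i)} + δ)`
for all `i`. -/
theorem slocc_equiv_diagonal_iff_lft (m : ℕ) (x y : Fin m → ℂ)
    (hx : Function.Injective x) (hy : Function.Injective y) :
    (∃ (a b c d : ℂ) (B C : Matrix (Fin m) (Fin m) ℂ),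
        a * d - b * c ≠ 0 ∧ IsUnit B.det ∧ IsUnit C.det ∧
        (1 : Matrix (Fin m) (Fin m) ℂ)
            = B * (a • (1 : Matrix (Fin m) (Fin m) ℂ) + c • Matrix.diagonal x) * Cᵀ ∧
        Matrix.diagonal y
            = B * (b • (1 : Matrix (Fin m) (Fin m) ℂ) + d • Matrix.diagonal x) * Cᵀ)
      ↔ (∃ (α β γ δ : ℂ) (σ : Equiv.Perm (Fin m)),
          α * δ - β * γ ≠ 0 ∧
          ∀ i, γ * x (σ i) + δ ≠ 0 ∧ y i = (α * x (σ i) + β) / (γ * x (σ i) + δ)) :=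
  slocc_equiv_diagonal_iff_lft_general m x y hy
end

section
/- Let R, S be complex m × n matrices representing a state ψ with full local ranks (2, m, n): R and S are linearly independent, {v ∈ ℂⁿ : Rv = 0 and Sv = 0} = 0, and {w ∈ ℂᵐ : Rᵀw = 0 and Sᵀw = 0} = 0. Let R̃, S̃ be complex m × (n−1) matrices representing a state φ with local ranks (2, m, n−1): R̃ and S̃ are linearly independent, {v ∈ ℂ^{n−1} : R̃v = 0 and S̃v = 0} = 0, and {w ∈ ℂᵐ : R̃ᵀw = 0 and S̃ᵀw = 0} = 0. Then φ is obtainable from ψ by SLOCC — i.e., there exist a 2 × 2 complex matrix (a b; c d), an m × m complex matrix B, and an (n−1) × n complex matrix C with R̃ = B(aR + cS)Cᵀ and S̃ = B(bR + dS)Cᵀ — if and only if there exist an index i ∈ {1, …, n}, scalars a_j ∈ ℂ for j ≠ i, and an invertible 2 × 2 complex matrix (a b; c d) such that, setting R' = aR + cS and S' = bR + dS and letting R'' and S'' be the m × (n−1) matrices whose columns are (col_j R' + a_j·col_i R')_{j≠i} and (col_j S' + a_j·col_i S')_{j≠i} respectively, the pair (R'', S'') is strictly equivalent to (R̃, S̃).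 -/
open Matrix

/-- Criterion for a non-invertible SLOCC transformation lowering Charlie's rank by one:
for `ψ ↔ (R, S)` with full local ranks `(2, m, n+1)` and `φ ↔ (R̃, S̃)` with local ranks
`(2, m, n)`, `φ ≤_SLOCC ψ` iff for some column index `i`, some constants `a_j` added to the
other columns, and some invertible change of variables by Alice, deleting column `i` after
adding multiples of it to the other columns yields a pencil strictly equivalent to that
of `φ`. -/
theorem noninvertible_slocc_criterion (m n : ℕ)
    (R S : Matrix (Fin m) (Fin (n + 1)) ℂ) (Rt St : Matrix (Fin m) (Fin n) ℂ)
    (hψA : LinearIndependent ℂ ![R, S])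
    (hψC : LinearMap.ker R.mulVecLin ⊓ LinearMap.ker S.mulVecLin = ⊥)
    (hψB : LinearMap.ker Rᵀ.mulVecLin ⊓ LinearMap.ker Sᵀ.mulVecLin = ⊥)
    (hφA : LinearIndependent ℂ ![Rt, St])
    (hφC : LinearMap.ker Rt.mulVecLin ⊓ LinearMap.ker St.mulVecLin = ⊥)
    (hφB : LinearMap.ker Rtᵀ.mulVecLin ⊓ LinearMap.ker Stᵀ.mulVecLin = ⊥) :
    (∃ (a b c d : ℂ) (B : Matrix (Fin m) (Fin m) ℂ) (C : Matrix (Fin n) (Fin (n + 1)) ℂ),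
        Rt = B * (a • R + c • S) * Cᵀ ∧ St = B * (b • R + d • S) * Cᵀ)
      ↔ (∃ (i : Fin (n + 1)) (av : Fin n → ℂ) (a b c d : ℂ),
          a * d - b * c ≠ 0 ∧
          ∃ (B' : Matrix (Fin m) (Fin m) ℂ) (C' : Matrix (Fin n) (Fin n) ℂ),
            IsUnit B'.det ∧ IsUnit C'.det ∧
            Rt = B' * (Matrix.of fun p j =>
              (a • R + c • S) p (i.succAbove j) + av j * (a • R + c • S) p i) * C'ᵀ ∧
            St = B' * (Matrix.of fun p j =>
              (b • R + d • S) p (i.succAbove j) + av j * (b • R + d • S) p i) * C'ᵀ) := by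
  constructor
  · rintro ⟨a, b, c, d, B, C, hR, hS⟩
    have kerC : ∀ v : Fin n → ℂ, Rt.mulVec v = 0 → St.mulVec v = 0 → v = 0 := by
      intro v h1 h2
      have hv : v ∈ LinearMap.ker Rt.mulVecLin ⊓ LinearMap.ker St.mulVecLin := by
        refine Submodule.mem_inf.mpr ⟨?_, ?_⟩ <;>
          simp only [LinearMap.mem_ker, Matrix.mulVecLin_apply] <;> assumption
      rw [hφC] at hv
      simpa using hv
    have kerB : ∀ w : Fin m → ℂ, Rtᵀ.mulVec w = 0 → Stᵀ.mulVec w = 0 → w = 0 := by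
      intro w h1 h2
      have hw : w ∈ LinearMap.ker Rtᵀ.mulVecLin ⊓ LinearMap.ker Stᵀ.mulVecLin := by
        refine Submodule.mem_inf.mpr ⟨?_, ?_⟩ <;>
          simp only [LinearMap.mem_ker, Matrix.mulVecLin_apply] <;> assumption
      rw [hφB] at hw
      simpa using hw
    -- Step 1: Alice's map is invertible
    have hA : a * d - b * c ≠ 0 := by
      intro h
      have hdet : (!![a, b; c, d]).det = 0 := by rw [Matrix.det_fin_two_of]; exact h
      obtain ⟨v, hv0, hv⟩ := Matrix.exists_mulVec_eq_zero_iff.mpr hdet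
      have h0 : a * v 0 + b * v 1 = 0 := by
        have := congrFun hv 0
        simpa [Matrix.mulVec, dotProduct, Fin.sum_univ_two] using this
      have h1 : c * v 0 + d * v 1 = 0 := by
        have := congrFun hv 1
        simpa [Matrix.mulVec, dotProduct, Fin.sum_univ_two] using this
      have hcomb : v 0 • Rt + v 1 • St = 0 := by
        have e0 : v 0 * a + v 1 * b = 0 := by linear_combination h0
        have e1 : v 0 * c + v 1 * d = 0 := by linear_combination h1
        rw [hR, hS, ← Matrix.smul_mul, ← Matrix.mul_smul, ← Matrix.smul_mul, ← Matrix.mul_smul,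
          ← Matrix.add_mul, ← Matrix.mul_add]
        have : v 0 • (a • R + c • S) + v 1 • (b • R + d • S)
            = (v 0 * a + v 1 * b) • R + (v 0 * c + v 1 * d) • S := by module
        rw [this, e0, e1]
        simp
      have hz := (LinearIndependent.pair_iff.mp hφA) (v 0) (v 1) hcomb
      apply hv0
      funext k
      fin_cases k
      exacts [hz.1, hz.2]
    -- Step 2: B is invertible
    have hBdet : B.det ≠ 0 := by
      intro h
      have hdetT : Bᵀ.det = 0 := by rwa [Matrix.det_transpose]
      obtain ⟨w, hw0, hw⟩ := Matrix.exists_mulVec_eq_zero_iff.mpr hdetT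
      apply hw0
      apply kerB
      · rw [hR, Matrix.transpose_mul, Matrix.transpose_mul, Matrix.transpose_transpose,
          ← Matrix.mulVec_mulVec, ← Matrix.mulVec_mulVec, hw]
        simp
      · rw [hS, Matrix.transpose_mul, Matrix.transpose_mul, Matrix.transpose_transpose,
          ← Matrix.mulVec_mulVec, ← Matrix.mulVec_mulVec, hw]
        simp
    -- Step 3: the columns of C are linearly dependent
    obtain ⟨f, hf, i, hfi⟩ : ∃ f : Fin (n + 1) → ℂ, C.mulVec f = 0 ∧ ∃ k, f k ≠ 0 := by
      have hnli : ¬ LinearIndependent ℂ (fun k : Fin (n + 1) => (fun p => C p k : Fin n → ℂ)) := by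
        intro h
        have := h.fintype_card_le_finrank
        simp [Module.finrank_fintype_fun_eq_card] at this
      obtain ⟨g, hg, k, hk⟩ := Fintype.not_linearIndependent_iff.mp hnli
      refine ⟨g, ?_, k, hk⟩
      funext p
      have := congrFun hg p
      simpa [Matrix.mulVec, dotProduct, Finset.sum_apply, mul_comm] using this
    -- Step 4: the key column relation
    set av : Fin n → ℂ := fun j => -(f (i.succAbove j)) / f i with hav
    have hcol : ∀ l : Fin n, C l i = ∑ j, av j * C l (i.succAbove j) := by
      intro l
      have h0 : ∑ k, C l k * f k = 0 := congrFun hf l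
      rw [Fin.sum_univ_succAbove (fun k => C l k * f k) i] at h0
      have hsum : ∑ j, C l (i.succAbove j) * f (i.succAbove j) = -(C l i * f i) := by
        linear_combination h0
      have hterm : ∀ j : Fin n, av j * C l (i.succAbove j)
          = (C l (i.succAbove j) * f (i.succAbove j)) * (-(f i)⁻¹) := by
        intro j
        rw [hav]
        ring
      rw [Finset.sum_congr rfl fun j _ => hterm j, ← Finset.sum_mul, hsum,
        neg_mul_neg, mul_assoc, mul_inv_cancel₀ hfi, mul_one]
    -- Step 5: factor C through column deletion
    set D : Matrix (Fin n) (Fin n) ℂ := Matrix.of fun j l => C l (i.succAbove j) with hD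
    have hfact : ∀ M : Matrix (Fin m) (Fin (n + 1)) ℂ,
        M * Cᵀ = (Matrix.of fun p j => M p (i.succAbove j) + av j * M p i) * D := by
      intro M
      ext p l
      simp only [Matrix.mul_apply, Matrix.transpose_apply, Matrix.of_apply, hD]
      rw [Fin.sum_univ_succAbove (fun k => M p k * C l k) i, hcol l, Finset.mul_sum,
        ← Finset.sum_add_distrib]
      exact Finset.sum_congr rfl fun j _ => by ring
    -- Step 6: D is invertible
    have hDdet : D.det ≠ 0 := by
      intro h
      obtain ⟨v, hv0, hv⟩ := Matrix.exists_mulVec_eq_zero_iff.mpr h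
      apply hv0
      have hDv : ∀ j : Fin n, ∑ l, C l (i.succAbove j) * v l = 0 := by
        intro j
        have := congrFun hv j
        simpa [hD, Matrix.mulVec, dotProduct] using this
      have hCv : Cᵀ.mulVec v = 0 := by
        funext k
        simp only [Matrix.mulVec, dotProduct, Matrix.transpose_apply, Pi.zero_apply]
        rcases eq_or_ne k i with hk | hk
        · rw [hk]
          calc ∑ l, C l i * v l
              = ∑ l, (∑ j, av j * C l (i.succAbove j)) * v l :=
                Finset.sum_congr rfl fun l _ => by rw [hcol l]
            _ = ∑ l, ∑ j, av j * C l (i.succAbove j) * v l := by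
                refine Finset.sum_congr rfl fun l _ => ?_
                rw [Finset.sum_mul]
            _ = ∑ j, ∑ l, av j * C l (i.succAbove j) * v l := Finset.sum_comm
            _ = ∑ j, av j * ∑ l, C l (i.succAbove j) * v l := by
                refine Finset.sum_congr rfl fun j _ => ?_
                rw [Finset.mul_sum]
                exact Finset.sum_congr rfl fun l _ => by ring
            _ = 0 := by simp [hDv]
        · obtain ⟨j, rfl⟩ := Fin.exists_succAbove_eq hk
          exact hDv j
      apply kerC
      · rw [hR, Matrix.mul_assoc, ← Matrix.mulVec_mulVec, ← Matrix.mulVec_mulVec, hCv]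
        simp
      · rw [hS, Matrix.mul_assoc, ← Matrix.mulVec_mulVec, ← Matrix.mulVec_mulVec, hCv]
        simp
    -- Assemble
    refine ⟨i, av, a, b, c, d, hA, B, Dᵀ, isUnit_iff_ne_zero.mpr hBdet, ?_, ?_, ?_⟩
    · rw [Matrix.det_transpose]; exact isUnit_iff_ne_zero.mpr hDdet
    · rw [hR, Matrix.mul_assoc, hfact, Matrix.transpose_transpose, Matrix.mul_assoc]
    · rw [hS, Matrix.mul_assoc, hfact, Matrix.transpose_transpose, Matrix.mul_assoc]
  · rintro ⟨i, av, a, b, c, d, _hdet, B', C', hB', hC', hR, hS⟩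
    set E : Matrix (Fin (n + 1)) (Fin n) ℂ :=
      Matrix.of fun k j => (if k = i.succAbove j then (1 : ℂ) else 0) +
        (if k = i then av j else 0) with hEdef
    have hE : ∀ M : Matrix (Fin m) (Fin (n + 1)) ℂ,
        M * E = Matrix.of fun p j => M p (i.succAbove j) + av j * M p i := by
      intro M
      ext p j
      simp only [hEdef, Matrix.mul_apply, Matrix.of_apply, mul_add, mul_ite, mul_one, mul_zero]
      rw [Finset.sum_add_distrib, Finset.sum_ite_eq' Finset.univ (i.succAbove j),
        Finset.sum_ite_eq' Finset.univ i]
      simp [mul_comm]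
    refine ⟨a, b, c, d, B', C' * Eᵀ, ?_, ?_⟩
    · rw [hR, Matrix.transpose_mul, Matrix.transpose_transpose, ← Matrix.mul_assoc,
        Matrix.mul_assoc B' _ E, hE]
    · rw [hS, Matrix.transpose_mul, Matrix.transpose_transpose, ← Matrix.mul_assoc,
        Matrix.mul_assoc B' _ E, hE]
end
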